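/- arXiv:0707.1729 — 2 statements merged into one kernel-verified Lean document; each statement's English description precedes it below -/
import Mathlib

section
/- Quantum value bound for transversal XOR games: let π be a probability distribution on {0,1}^n × {0,1}^l, g : {0,1}^n × {0,1}^l → {0,1}, |φ⟩ a unit vector in H_A ⊗ H_B, and for each s, t ∈ {0,1}^n let A_s and B_t be Hermitian operators with all eigenvalues in {−1, 1} on H_A and H_B respectively. Define θ_z = Σ_r π(z,r)(1/2)(-1)^{g(z,r)}. Then 1/2 + Σ_{z ∈ {0,1}^n} θ_z · 2^{-n} Σ_{s ∈ {0,1}^n} ⟨φ| A_s ⊗ B_{s⊕z} |φ⟩ ≤ 1/2 + max_{u ∈ {0,1}^n} |Σ_z (-1)^{u·z} θ_z|. -/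
/-!
Fourier-transform the observables over `(ZMod 2)ⁿ`: with `Âᵤ = 2⁻ⁿ ∑ₛ (-1)^(u·s) Aₛ` and
likewise `B̂ᵤ`, orthogonality of characters turns `2⁻ⁿ ∑ₛ Aₛ ⊗ B_{s+z}` into
`∑ᵤ (-1)^(u·z) Âᵤ ⊗ B̂ᵤ`, so the bias of the strategy is `∑ᵤ θ̂ᵤ ⟨φ|Âᵤ ⊗ B̂ᵤ|φ⟩` with
`θ̂ᵤ = ∑_z (-1)^(u·z) θ_z`. The `Âᵤ` are Hermitian and, by Parseval and `Aₛ² = 1`,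
`∑ᵤ Âᵤ² = 1` (likewise for `B̂`). Since `2 |Re⟨φ|X ⊗ Y|φ⟩| ≤ ⟨φ|X² ⊗ 1|φ⟩ + ⟨φ|1 ⊗ Y²|φ⟩`
for Hermitian `X`, `Y`, the bias is at most `maxᵤ |θ̂ᵤ|`.
-/

open scoped Kronecker ComplexOrder
open Matrix Finset

lemma neg_one_pow_val_add {R : Type*} [Ring R] (a b : ZMod 2) :
    (-1 : R) ^ (a + b).val = (-1) ^ a.val * (-1) ^ b.val := by
  rw [ZMod.val_add, ← neg_one_pow_eq_pow_mod_two (R := R), pow_add]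

lemma neg_one_pow_val_sum {R ι : Type*} [CommRing R] (s : Finset ι)
    (f : ι → ZMod 2) : (-1 : R) ^ (∑ i ∈ s, f i).val = ∏ i ∈ s, (-1 : R) ^ (f i).val := by
  classical
  induction s using Finset.induction with
  | empty => simp
  | insert i s hi ih => rw [sum_insert hi, prod_insert hi, neg_one_pow_val_add, ih]

namespace Matrix

variable {σ l m n p α : Type*} [NonUnitalNonAssocSemiring α]

lemma sum_kronecker (s : Finset σ) (A : σ → Matrix l m α) (B : Matrix n p α) :
    (∑ i ∈ s, A i) ⊗ₖ B = ∑ i ∈ s, A i ⊗ₖ B := by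
  ext
  simp [sum_apply, sum_mul]

lemma kronecker_sum (s : Finset σ) (A : Matrix l m α) (B : σ → Matrix n p α) :
    A ⊗ₖ (∑ i ∈ s, B i) = ∑ i ∈ s, A ⊗ₖ B i := by
  ext
  simp [sum_apply, mul_sum]

end Matrix

section Walsh

variable {n : ℕ}

def walsh (u z : Fin n → ZMod 2) : ℝ := (-1) ^ (∑ i, u i * z i).val

lemma walsh_zero_right (u : Fin n → ZMod 2) : walsh u 0 = 1 := by
  simp [walsh]

lemma walsh_add_right (u z z' : Fin n → ZMod 2) :
    walsh u (z + z') = walsh u z * walsh u z' := by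
  simp only [walsh, Pi.add_apply, mul_add, sum_add_distrib, neg_one_pow_val_add]

lemma sum_walsh (z : Fin n → ZMod 2) :
    ∑ u, walsh u z = if z = 0 then 2 ^ n else 0 := by
  have sum_coord (c : ZMod 2) : ∑ a : ZMod 2, (-1 : ℝ) ^ (a * c).val = if c = 0 then 2 else 0 := by
    obtain rfl | rfl : c = 0 ∨ c = 1 := by decide +revert
    · simp
    · rw [show (univ : Finset (ZMod 2)) = {0, 1} by decide]
      simp [ZMod.val_one]
  simp_rw [walsh, neg_one_pow_val_sum]
  rw [← Fintype.prod_sum fun i a => (-1 : ℝ) ^ (a * z i).val]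
  simp_rw [sum_coord]
  simp [prod_ite_zero, funext_iff]

end Walsh

section WalshTransform

variable {n : ℕ} {M N P : Type*} [AddCommGroup M] [Module ℝ M] [AddCommGroup N] [Module ℝ N]
  [AddCommGroup P] [Module ℝ P]

noncomputable def walshTransform (f : (Fin n → ZMod 2) → M) (u : Fin n → ZMod 2) : M :=
  ((2 : ℝ) ^ n)⁻¹ • ∑ s, walsh u s • f s

lemma sum_walsh_smul_walshTransform (β : M →ₗ[ℝ] N →ₗ[ℝ] P) (f : (Fin n → ZMod 2) → M)
    (g : (Fin n → ZMod 2) → N) (z : Fin n → ZMod 2) :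
    ∑ u, walsh u z • β (walshTransform f u) (walshTransform g u) =
      ((2 : ℝ) ^ n)⁻¹ • ∑ s, β (f s) (g (s + z)) := by
  have expand (u : Fin n → ZMod 2) :
      walsh u z • β (walshTransform f u) (walshTransform g u) =
        ((2 : ℝ) ^ n)⁻¹ • ((2 : ℝ) ^ n)⁻¹ • ∑ s, ∑ t, walsh u (s + t + z) • β (f s) (g t) := by
    simp only [walshTransform, map_smul, map_sum, LinearMap.smul_apply, LinearMap.sum_apply,
      smul_sum, smul_smul, walsh_add_right]
    rw [sum_comm]
    refine sum_congr rfl fun s _ => sum_congr rfl fun t _ => ?_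
    congr 1
    ring
  have orthogonality (s t : Fin n → ZMod 2) :
      ∑ u, walsh u (s + t + z) = if t = s + z then 2 ^ n else 0 := by
    rw [sum_walsh]
    refine if_congr ?_ rfl rfl
    rw [add_right_comm, add_eq_zero_iff_neg_eq, ZModModule.neg_eq_self, eq_comm]
  calc ∑ u, walsh u z • β (walshTransform f u) (walshTransform g u)
      = ((2 : ℝ) ^ n)⁻¹ • ((2 : ℝ) ^ n)⁻¹ •
          ∑ s, ∑ t, (∑ u, walsh u (s + t + z)) • β (f s) (g t) := by
        simp only [expand, ← smul_sum, sum_smul]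
        rw [sum_comm]
        refine congrArg _ (congrArg _ (sum_congr rfl fun s _ => sum_comm))
    _ = ((2 : ℝ) ^ n)⁻¹ • ∑ s, β (f s) (g (s + z)) := by
        simp only [orthogonality, ite_smul, zero_smul, sum_ite_eq', mem_univ, if_true, ← smul_sum,
          smul_smul]
        rw [inv_mul_cancel₀ (by positivity), mul_one]

lemma sum_walshTransform_mul_self {R : Type*} [Ring R] [Algebra ℝ R] (f : (Fin n → ZMod 2) → R)
    (hf : ∀ s, f s * f s = 1) : ∑ u, walshTransform f u * walshTransform f u = 1 := by
  have h := sum_walsh_smul_walshTransform (LinearMap.mul ℝ R) f f 0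
  simp only [walsh_zero_right, one_smul, LinearMap.mul_apply', add_zero, hf, sum_const, card_univ,
    Fintype.card_pi, ZMod.card, prod_const, Fintype.card_fin] at h
  rw [h, ← Nat.cast_smul_eq_nsmul ℝ, smul_smul, Nat.cast_pow, Nat.cast_ofNat,
    inv_mul_cancel₀ (by positivity), one_smul]

lemma isSelfAdjoint_walshTransform [StarAddMonoid M] [StarModule ℝ M] {f : (Fin n → ZMod 2) → M}
    (hf : ∀ s, IsSelfAdjoint (f s)) (u : Fin n → ZMod 2) : IsSelfAdjoint (walshTransform f u) :=
  .smul (.all _) (isSelfAdjoint_sum _ fun s _ => .smul (.all _) (hf s))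

end WalshTransform

section Expectation

variable {ι : Type*} [Fintype ι]

noncomputable def reExpectation (φ : ι → ℂ) : Matrix ι ι ℂ →ₗ[ℝ] ℝ where
  toFun M := (star φ ⬝ᵥ M *ᵥ φ).re
  map_add' M N := by simp [add_mulVec]
  map_smul' r M := by simp [smul_mulVec]

lemma reExpectation_apply (φ : ι → ℂ) (M : Matrix ι ι ℂ) :
    reExpectation φ M = (star φ ⬝ᵥ M *ᵥ φ).re :=
  rfl

lemma reExpectation_one [DecidableEq ι] (φ : ι → ℂ) : reExpectation φ 1 = ∑ p, ‖φ p‖ ^ 2 := by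
  simp [reExpectation_apply, dotProduct, Complex.sq_norm, Complex.normSq_apply]

lemma reExpectation_conjTranspose (φ : ι → ℂ) (M : Matrix ι ι ℂ) :
    reExpectation φ Mᴴ = reExpectation φ M := by
  have h : star φ ⬝ᵥ Mᴴ *ᵥ φ = star (star φ ⬝ᵥ M *ᵥ φ) := by
    rw [dotProduct_mulVec, ← star_mulVec, ← star_dotProduct_star, star_star, dotProduct_comm]
  rw [reExpectation_apply, reExpectation_apply, h, Complex.star_def, Complex.conj_re]

lemma reExpectation_conjTranspose_mul_self_nonneg (φ : ι → ℂ) (M : Matrix ι ι ℂ) :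
    0 ≤ reExpectation φ (Mᴴ * M) :=
  (posSemidef_conjTranspose_mul_self M).re_dotProduct_nonneg φ

lemma two_mul_abs_reExpectation_mul_le {P Q : Matrix ι ι ℂ} (hP : P.IsHermitian)
    (hQ : Q.IsHermitian) (φ : ι → ℂ) :
    2 * |reExpectation φ (P * Q)| ≤ reExpectation φ (P * P) + reExpectation φ (Q * Q) := by
  have h_swap : reExpectation φ (Q * P) = reExpectation φ (P * Q) := by
    rw [← reExpectation_conjTranspose, conjTranspose_mul, hP.eq, hQ.eq]
  have h_add := reExpectation_conjTranspose_mul_self_nonneg φ (P + Q)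
  have h_sub := reExpectation_conjTranspose_mul_self_nonneg φ (P - Q)
  rw [conjTranspose_add, hP.eq, hQ.eq, add_mul, mul_add, mul_add] at h_add
  rw [conjTranspose_sub, hP.eq, hQ.eq, sub_mul, mul_sub, mul_sub] at h_sub
  simp only [map_add, map_sub, h_swap] at h_add h_sub
  rcases abs_cases (reExpectation φ (P * Q)) with ⟨h, -⟩ | ⟨h, -⟩ <;> linarith

variable {ιA ιB : Type*} [Fintype ιA] [DecidableEq ιA] [Fintype ιB] [DecidableEq ιB]

lemma two_mul_abs_reExpectation_kronecker_le {X : Matrix ιA ιA ℂ} {Y : Matrix ιB ιB ℂ}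
    (hX : X.IsHermitian) (hY : Y.IsHermitian) (φ : ιA × ιB → ℂ) :
    2 * |reExpectation φ (X ⊗ₖ Y)| ≤
      reExpectation φ ((X * X) ⊗ₖ 1) + reExpectation φ (1 ⊗ₖ (Y * Y)) := by
  have hX1 : (X ⊗ₖ (1 : Matrix ιB ιB ℂ)).IsHermitian := by
    rw [IsHermitian, conjTranspose_kronecker, hX.eq, conjTranspose_one]
  have h1Y : ((1 : Matrix ιA ιA ℂ) ⊗ₖ Y).IsHermitian := by
    rw [IsHermitian, conjTranspose_kronecker, hY.eq, conjTranspose_one]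
  simpa only [← mul_kronecker_mul, mul_one, one_mul] using
    two_mul_abs_reExpectation_mul_le hX1 h1Y φ

lemma sum_mul_reExpectation_kronecker_le_sup {σ : Type*} [Fintype σ] [Nonempty σ] (c : σ → ℝ)
    {X : σ → Matrix ιA ιA ℂ} {Y : σ → Matrix ιB ιB ℂ} (hX : ∀ u, (X u).IsHermitian)
    (hY : ∀ u, (Y u).IsHermitian) (hXX : ∑ u, X u * X u = 1) (hYY : ∑ u, Y u * Y u = 1)
    {φ : ιA × ιB → ℂ} (hφ : ∑ p, ‖φ p‖ ^ 2 = 1) :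
    ∑ u, c u * reExpectation φ (X u ⊗ₖ Y u) ≤ univ.sup' univ_nonempty fun u => |c u| := by
  set C := univ.sup' univ_nonempty fun u => |c u|
  have hC (u : σ) : |c u| ≤ C := le_sup' (fun u => |c u|) (mem_univ u)
  have h_normX : ∑ u, reExpectation φ ((X u * X u) ⊗ₖ 1) = 1 := by
    rw [← map_sum, ← sum_kronecker, hXX, one_kronecker_one, reExpectation_one, hφ]
  have h_normY : ∑ u, reExpectation φ (1 ⊗ₖ (Y u * Y u)) = 1 := by
    rw [← map_sum, ← kronecker_sum, hYY, one_kronecker_one, reExpectation_one, hφ]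
  have h_term (u : σ) : c u * reExpectation φ (X u ⊗ₖ Y u) ≤
      C * ((reExpectation φ ((X u * X u) ⊗ₖ 1) + reExpectation φ (1 ⊗ₖ (Y u * Y u))) / 2) := by
    have h_cs := two_mul_abs_reExpectation_kronecker_le (hX u) (hY u) φ
    calc c u * reExpectation φ (X u ⊗ₖ Y u) ≤ |c u| * |reExpectation φ (X u ⊗ₖ Y u)| :=
          (le_abs_self _).trans (abs_mul _ _).le
      _ ≤ C * ((reExpectation φ ((X u * X u) ⊗ₖ 1) + reExpectation φ (1 ⊗ₖ (Y u * Y u))) / 2) :=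
          mul_le_mul (hC u) (by linarith) (abs_nonneg _) ((abs_nonneg _).trans (hC u))
  calc ∑ u, c u * reExpectation φ (X u ⊗ₖ Y u)
      ≤ ∑ u, C * ((reExpectation φ ((X u * X u) ⊗ₖ 1) +
          reExpectation φ (1 ⊗ₖ (Y u * Y u))) / 2) := sum_le_sum fun u _ => h_term u
    _ = C := by rw [← mul_sum, ← sum_div, sum_add_distrib, h_normX, h_normY]; ring

end Expectation

theorem transversal_xor_quantum_bound_general (n : ℕ) (ιA ιB : Type)
    [Fintype ιA] [DecidableEq ιA] [Fintype ιB] [DecidableEq ιB]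
    (φ : ιA × ιB → ℂ) (hφ : ∑ p, ‖φ p‖ ^ 2 = 1)
    (A : (Fin n → ZMod 2) → Matrix ιA ιA ℂ)
    (hA : ∀ s, (A s).IsHermitian) (hA2 : ∀ s, A s * A s = 1)
    (B : (Fin n → ZMod 2) → Matrix ιB ιB ℂ)
    (hB : ∀ t, (B t).IsHermitian) (hB2 : ∀ t, B t * B t = 1)
    (θ : (Fin n → ZMod 2) → ℝ) :
    1 / 2 + ∑ z : Fin n → ZMod 2, θ z * (((2 : ℝ) ^ n)⁻¹ *
        ∑ s : Fin n → ZMod 2,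
          (∑ p, (starRingEnd ℂ) (φ p) * ((A s ⊗ₖ B (s + z)).mulVec φ p)).re) ≤
      1 / 2 + Finset.univ.sup' Finset.univ_nonempty
        (fun u : Fin n → ZMod 2 =>
          |∑ z : Fin n → ZMod 2, (-1 : ℝ) ^ (∑ i, u i * z i).val * θ z|) := by
  have h_lhs (M : Matrix (ιA × ιB) (ιA × ιB) ℂ) :
      (∑ p, (starRingEnd ℂ) (φ p) * (M *ᵥ φ) p).re = reExpectation φ M := rfl
  simp only [h_lhs]
  have h_fourier (z : Fin n → ZMod 2) :
      ((2 : ℝ) ^ n)⁻¹ * ∑ s, reExpectation φ (A s ⊗ₖ B (s + z)) =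
        ∑ u, walsh u z * reExpectation φ (walshTransform A u ⊗ₖ walshTransform B u) :=
    (sum_walsh_smul_walshTransform ((kroneckerBilinear (R := ℝ)).compr₂ (reExpectation φ))
      A B z).symm
  have h_regroup : ∑ z, θ z * (((2 : ℝ) ^ n)⁻¹ * ∑ s, reExpectation φ (A s ⊗ₖ B (s + z))) =
      ∑ u, (∑ z, walsh u z * θ z) * reExpectation φ (walshTransform A u ⊗ₖ walshTransform B u) := by
    simp only [h_fourier, mul_sum, sum_mul]
    rw [sum_comm]
    exact sum_congr rfl fun u _ => sum_congr rfl fun z _ => by ring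
  refine add_le_add_right (h_regroup.trans_le ?_) _
  exact sum_mul_reExpectation_kronecker_le_sup _
    (isSelfAdjoint_walshTransform hA) (isSelfAdjoint_walshTransform hB)
    (sum_walshTransform_mul_self A hA2) (sum_walshTransform_mul_self B hB2) hφ

/-- Quantum value bound for transversal XOR games: with `θ_z = ∑_r π(z,r)(1/2)(-1)^(g(z,r))`,
a unit vector `|φ⟩ ∈ H_A ⊗ H_B`, and `±1`-observables `A_s`, `B_t` (Hermitian with square
the identity), the acceptance probability
`1/2 + ∑_z θ_z 2⁻ⁿ ∑_s ⟨φ|A_s ⊗ B_{s⊕z}|φ⟩` is at most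
`1/2 + max_u |∑_z (-1)^(u·z) θ_z|`. -/
theorem transversal_xor_quantum_bound (n l : ℕ) (ιA ιB : Type)
    [Fintype ιA] [DecidableEq ιA] [Fintype ιB] [DecidableEq ιB]
    (π : (Fin n → ZMod 2) × (Fin l → ZMod 2) → ℝ)
    (hπ0 : ∀ p, 0 ≤ π p) (hπ1 : ∑ p, π p = 1)
    (g : (Fin n → ZMod 2) × (Fin l → ZMod 2) → ZMod 2)
    (φ : ιA × ιB → ℂ) (hφ : ∑ p, ‖φ p‖ ^ 2 = 1)
    (A : (Fin n → ZMod 2) → Matrix ιA ιA ℂ)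
    (hA : ∀ s, (A s).IsHermitian) (hA2 : ∀ s, A s * A s = 1)
    (B : (Fin n → ZMod 2) → Matrix ιB ιB ℂ)
    (hB : ∀ t, (B t).IsHermitian) (hB2 : ∀ t, B t * B t = 1)
    (θ : (Fin n → ZMod 2) → ℝ)
    (hθ : ∀ z, θ z = ∑ r : Fin l → ZMod 2,
      π (z, r) * (1 / 2) * (-1 : ℝ) ^ (g (z, r)).val) :
    1 / 2 + ∑ z : Fin n → ZMod 2, θ z * (((2 : ℝ) ^ n)⁻¹ *
        ∑ s : Fin n → ZMod 2,
          (∑ p, (starRingEnd ℂ) (φ p) * ((A s ⊗ₖ B (s + z)).mulVec φ p)).re) ≤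
      1 / 2 + Finset.univ.sup' Finset.univ_nonempty
        (fun u : Fin n → ZMod 2 =>
          |∑ z : Fin n → ZMod 2, (-1 : ℝ) ^ (∑ i, u i * z i).val * θ z|) :=
  transversal_xor_quantum_bound_general n ιA ιB φ hφ A hA hA2 B hB hB2 θ
end

section
/- Classical value of a transversal XOR game achieves the spectral bound: let π be a probability distribution on {0,1}^n × {0,1}^l and g : {0,1}^n × {0,1}^l → {0,1}, and set θ_z = Σ_r π(z,r)(1/2)(-1)^{g(z,r)} and λ_u = Σ_z (-1)^{u·z} θ_z. Fix w ∈ {0,1}^n achieving |λ_w| = max_u |λ_u|, and let γ = 0 if λ_w ≥ 0 and γ = 1 otherwise. If Alice answers a = (w · s) ⊕ γ on question s and Bob answers b = w · t on question t = s ⊕ z, then Pr[a ⊕ b = g(z,r)] = 1/2 + max_u |λ_u|, where the probability is over (z,r) ∼ π and s uniform and independent of (z,r). -/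
/-! Writing `χ x = (-1)^x` for `x : ZMod 2`, the indicator of `a = b` is `(1 + χ (a + b)) / 2`,
and `χ` turns sums into products. Hence the strategy given by `w` and `γ` wins with probability
`1/2 + χ γ · λ_w`, and the choice of `γ` makes `χ γ · λ_w = |λ_w|`, the largest `|λ_u|`. -/

open Finset

namespace ZMod

lemma neg_one_pow_val_add {R : Type*} [Ring R] (a b : ZMod 2) :
    (-1 : R) ^ (a + b).val = (-1) ^ a.val * (-1) ^ b.val := by
  rw [val_add, ← neg_one_pow_eq_pow_mod_two, pow_add]

lemma ite_eq_eq_half_add_half_mul_neg_one_pow {K : Type*} [DivisionRing K] [NeZero (2 : K)]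
    (a b : ZMod 2) (p : K) :
    (if a = b then p else 0) = p / 2 + p / 2 * (-1) ^ (a + b).val := by
  obtain rfl | rfl : a = 0 ∨ a = 1 := by decide +revert
  all_goals obtain rfl | rfl : b = 0 ∨ b = 1 := by decide +revert
  all_goals simp [show (1 + 1 : ZMod 2) = 0 from rfl, ZMod.val_one]

end ZMod

lemma neg_one_pow_sign_mul_eq_abs (x : ℝ) :
    (-1 : ℝ) ^ (if 0 ≤ x then (0 : ZMod 2) else 1).val * x = |x| := by
  split_ifs with hx
  · simp [abs_of_nonneg hx]
  · simp [abs_of_neg (not_le.mp hx), ZMod.val_one]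

lemma linear_strategy_win_prob_eq {n l : ℕ}
    (π : (Fin n → ZMod 2) × (Fin l → ZMod 2) → ℝ) (hπ1 : ∑ p, π p = 1)
    (g : (Fin n → ZMod 2) × (Fin l → ZMod 2) → ZMod 2) (w : Fin n → ZMod 2) (γ : ZMod 2) :
    (∑ z : Fin n → ZMod 2, ∑ r : Fin l → ZMod 2,
        if (∑ i, w i * z i) + γ = g (z, r) then π (z, r) else 0) =
      1 / 2 + (-1 : ℝ) ^ γ.val * ∑ z : Fin n → ZMod 2, (-1 : ℝ) ^ (∑ i, w i * z i).val *
        ∑ r : Fin l → ZMod 2, π (z, r) * (1 / 2) * (-1 : ℝ) ^ (g (z, r)).val := by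
  have half_mass : ∑ z : Fin n → ZMod 2, ∑ r : Fin l → ZMod 2, π (z, r) / 2 = 1 / 2 := by
    rw [← Fintype.sum_prod_type' (fun z r => π (z, r) / 2), ← sum_div, hπ1]
  simp_rw [ZMod.ite_eq_eq_half_add_half_mul_neg_one_pow, sum_add_distrib, half_mass, mul_sum,
    ZMod.neg_one_pow_val_add]
  congr 1
  refine sum_congr rfl fun z _ => sum_congr rfl fun r _ => ?_
  ring

theorem transversal_xor_classical_value_general (n l : ℕ)
    (π : (Fin n → ZMod 2) × (Fin l → ZMod 2) → ℝ)
    (hπ1 : ∑ p, π p = 1)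
    (g : (Fin n → ZMod 2) × (Fin l → ZMod 2) → ZMod 2)
    (θ : (Fin n → ZMod 2) → ℝ)
    (hθ : ∀ z, θ z = ∑ r : Fin l → ZMod 2,
      π (z, r) * (1 / 2) * (-1 : ℝ) ^ (g (z, r)).val)
    (lam : (Fin n → ZMod 2) → ℝ)
    (hlam : ∀ u, lam u = ∑ z : Fin n → ZMod 2,
      (-1 : ℝ) ^ (∑ i, u i * z i).val * θ z)
    (w : Fin n → ZMod 2)
    (hw : |lam w| = Finset.univ.sup' Finset.univ_nonempty fun u => |lam u|)
    (γ : ZMod 2) (hγ : γ = if 0 ≤ lam w then 0 else 1) :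
    (∑ z : Fin n → ZMod 2, ∑ r : Fin l → ZMod 2,
        if (∑ i, w i * z i) + γ = g (z, r) then π (z, r) else 0) =
      1 / 2 + Finset.univ.sup' Finset.univ_nonempty fun u => |lam u| := by
  rw [linear_strategy_win_prob_eq π hπ1 g w γ, ← hw]
  simp_rw [← hθ, ← hlam, hγ, neg_one_pow_sign_mul_eq_abs]

/-- Classical value of a transversal XOR game achieves the spectral bound: with
`θ_z = ∑_r π(z,r)(1/2)(-1)^(g(z,r))`, `λ_u = ∑_z (-1)^(u·z) θ_z`, `w` achieving
`|λ_w| = max_u |λ_u|`, and `γ = 0` if `λ_w ≥ 0` else `γ = 1`, the linear strategy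
`a = (w·s) ⊕ γ`, `b = w·t` with `t = s ⊕ z` succeeds with probability exactly
`1/2 + max_u |λ_u|`.  (Since `a ⊕ b = (w·z) ⊕ γ`, the probability is
`∑_{z,r} π(z,r) [w·z ⊕ γ = g(z,r)]`.) -/
theorem transversal_xor_classical_value (n l : ℕ)
    (π : (Fin n → ZMod 2) × (Fin l → ZMod 2) → ℝ)
    (hπ0 : ∀ p, 0 ≤ π p) (hπ1 : ∑ p, π p = 1)
    (g : (Fin n → ZMod 2) × (Fin l → ZMod 2) → ZMod 2)
    (θ : (Fin n → ZMod 2) → ℝ)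
    (hθ : ∀ z, θ z = ∑ r : Fin l → ZMod 2,
      π (z, r) * (1 / 2) * (-1 : ℝ) ^ (g (z, r)).val)
    (lam : (Fin n → ZMod 2) → ℝ)
    (hlam : ∀ u, lam u = ∑ z : Fin n → ZMod 2,
      (-1 : ℝ) ^ (∑ i, u i * z i).val * θ z)
    (w : Fin n → ZMod 2)
    (hw : |lam w| = Finset.univ.sup' Finset.univ_nonempty fun u => |lam u|)
    (γ : ZMod 2) (hγ : γ = if 0 ≤ lam w then 0 else 1) :
    (∑ z : Fin n → ZMod 2, ∑ r : Fin l → ZMod 2,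
        if (∑ i, w i * z i) + γ = g (z, r) then π (z, r) else 0) =
      1 / 2 + Finset.univ.sup' Finset.univ_nonempty fun u => |lam u| :=
  transversal_xor_classical_value_general n l π hπ1 g θ hθ lam hlam w hw γ hγ
end
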